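/- For each z ∈ I_* fix a reduced I_*-expression σ of z and define σ_z accordingly. Then the map σ_*: z ↦ σ_z is an injection from I_* into W; that is, σ_{z_1} = σ_{z_2} if and only if z_1 = z_2. -/

import Mathlib

set_option synthInstance.maxHeartbeats 1000000
set_option maxHeartbeats 2000000

open scoped Classical TensorProduct

noncomputable section

namespace IUIM

/-- The field `ℚ(u)` of rational functions; `u` is `RatFunc.X`. -/
abbrev Fq : Type := RatFunc ℚ

/-- The Laurent polynomial subring `ℤ[u, u⁻¹]` of `ℚ(u)`. -/
def Ar : Subring Fq := Subring.closure {RatFunc.X, (RatFunc.X)⁻¹}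

/-- The subring `A₋₁ = ℤ[u, u⁻¹, (u+1)⁻¹]` of `ℚ(u)`. -/
def Am1 : Subring Fq := Subring.closure {RatFunc.X, (RatFunc.X)⁻¹, (RatFunc.X + 1)⁻¹}

/-- The subring `A±₁ = ℤ[u, u⁻¹, (u+1)⁻¹, (u-1)⁻¹]` of `ℚ(u)`. -/
def Apm : Subring Fq :=
  Subring.closure {RatFunc.X, (RatFunc.X)⁻¹, (RatFunc.X + 1)⁻¹, (RatFunc.X - 1)⁻¹}

lemma X_mem_Am1 : (RatFunc.X : Fq) ∈ Am1 := Subring.subset_closure (by simp)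
lemma X_mem_Apm : (RatFunc.X : Fq) ∈ Apm := Subring.subset_closure (by simp)

/-- `u` as an element of `A±₁`. -/
def uApm : ↥Apm := ⟨RatFunc.X, X_mem_Apm⟩
/-- `u` as an element of `A₋₁`. -/
def uAm1 : ↥Am1 := ⟨RatFunc.X, X_mem_Am1⟩

variable {B W : Type*} [Group W] {M : CoxeterMatrix B} (cs : CoxeterSystem M W) (star : W ≃* W)

/-- The Bruhat order on `W`, via the subword property: `x ≤ w` iff some reduced word
for `w` contains a reduced word for `x` as a subword. -/
def BruhatLE (x w : W) : Prop :=
  ∃ ω : List B, cs.IsReduced ω ∧ cs.wordProd ω = w ∧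
    ∃ ω' : List B, ω'.Sublist ω ∧ cs.IsReduced ω' ∧ cs.wordProd ω' = x

/-- The strict Bruhat order. -/
def BruhatLT (x w : W) : Prop := BruhatLE cs x w ∧ x ≠ w

/-- The twisted product `s ⋉ w`: it is `s*w` if `s*w = w*s^*`, and `s*w*s^*` otherwise. -/
def twMul (i : B) (w : W) : W :=
  if cs.simple i * w = w * star (cs.simple i) then cs.simple i * w
  else cs.simple i * w * star (cs.simple i)

/-- `twProd [i₁,...,iₖ] = sᵢ₁ ⋉ (sᵢ₂ ⋉ ( ⋯ ⋉ (sᵢₖ ⋉ 1)))`. -/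
def twProd (ω : List B) : W := ω.foldr (twMul cs star) 1

/-- The minimal length of an `I⋆`-expression for `w` (the rank function `ρ`). -/
def rho (w : W) : ℕ := sInf {k | ∃ ω : List B, ω.length = k ∧ twProd cs star ω = w}

/-- `ω` is a reduced `I⋆`-expression for `w`: its twisted product is `w` and it has
minimal length among all such expressions. -/
def IsRedI (ω : List B) (w : W) : Prop :=
  twProd cs star ω = w ∧ ∀ ω' : List B, twProd cs star ω' = w → ω.length ≤ ω'.length

/-- The statistic `ℓ^*` computed from a word `(i₁, …, i_k)`: the number of indices `t`
such that `s_{i_t} w_t = w_t (s_{i_t})^*`, where `w_t = s_{i_t} ⋉ ⋯ ⋉ s_{i_1} ⋉ w` is the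
corresponding tail twisted product `s_{i_{t+1}} ⋉ ⋯ ⋉ s_{i_k} ⋉ 1`. -/
def lstarWord : List B → ℕ
  | [] => 0
  | i :: ω =>
      (if cs.simple i * twProd cs star ω = twProd cs star ω * star (cs.simple i) then 1 else 0)
        + lstarWord ω

lemma twMul_mem (hst : ∀ v, star (star v) = v) (i : B) {w : W} (hw : star w = w⁻¹) :
    star (twMul cs star i w) = (twMul cs star i w)⁻¹ := by
  unfold twMul
  split_ifs with h
  · have h2 : star (cs.simple i) = w⁻¹ * (cs.simple i * w) := by rw [h]; group
    rw [map_mul, hw, h2, mul_inv_rev, cs.inv_simple i]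
    group
  · have hs : star (cs.simple i) * star (cs.simple i) = 1 := by
      rw [← map_mul, cs.simple_mul_simple_self, map_one]
    have hsinv : (star (cs.simple i))⁻¹ = star (cs.simple i) := by
      exact (eq_inv_of_mul_eq_one_left hs).symm
    rw [map_mul, map_mul, hw, hst, mul_inv_rev, mul_inv_rev, hsinv, cs.inv_simple i]
    group

/-- `s ⋉ w` as a twisted involution. -/
def twK (hst : ∀ v, star (star v) = v) (i : B) (z : {w : W // star w = w⁻¹}) :
    {w : W // star w = w⁻¹} :=
  ⟨twMul cs star i z.1, twMul_mem cs star hst i z.2⟩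

/-- The identity element as a twisted involution. -/
def oneI : {w : W // star w = w⁻¹} := ⟨1, by simp⟩

/-- `T` is the standard basis of an Iwahori–Hecke algebra with Hecke parameter `u ^ 2`
(over a ground ring `R`, with `u ∈ R`): `T_w T_{w'} = T_{w w'}` whenever lengths add, and
`(T_s + 1)(T_s - u²) = 0` for all simple reflections `s`. -/
def IsHecke {R H : Type*} [CommRing R] [Ring H] [Algebra R H] (u : R) (T : Module.Basis W R H) :
    Prop :=
  T 1 = 1 ∧
  (∀ x y : W, cs.length (x * y) = cs.length x + cs.length y → T x * T y = T (x * y)) ∧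
  (∀ i : B, (T (cs.simple i) + 1) * (T (cs.simple i) - algebraMap R H (u ^ 2)) = 0)

/-- The Lusztig–Vogan rules for the `u`-deformed involution module: the requirements on
the action `act` of the standard basis elements `T_s` on the basis vectors `e z = a_z`
indexed by the twisted involutions. -/
def LVRules {R Mu : Type*} [CommRing R] [AddCommGroup Mu] [Module R Mu]
    (hst : ∀ v, star (star v) = v) (u : R)
    (e : {w : W // star w = w⁻¹} → Mu) (act : W → Mu → Mu) : Prop :=
  ∀ (i : B) (z : {w : W // star w = w⁻¹}),
    (cs.simple i * z.1 = z.1 * star (cs.simple i) →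
        BruhatLT cs z.1 (cs.simple i * z.1) →
      act (cs.simple i) (e z) = u • e z + (u + 1) • e (twK cs star hst i z)) ∧
    (cs.simple i * z.1 = z.1 * star (cs.simple i) →
        BruhatLT cs (cs.simple i * z.1) z.1 →
      act (cs.simple i) (e z) =
        (u ^ 2 - u - 1) • e z + (u ^ 2 - u) • e (twK cs star hst i z)) ∧
    (cs.simple i * z.1 ≠ z.1 * star (cs.simple i) →
        BruhatLT cs z.1 (cs.simple i * z.1) →
      act (cs.simple i) (e z) = e (twK cs star hst i z)) ∧
    (cs.simple i * z.1 ≠ z.1 * star (cs.simple i) →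
        BruhatLT cs (cs.simple i * z.1) z.1 →
      act (cs.simple i) (e z) = (u ^ 2 - 1) • e z + u ^ 2 • e (twK cs star hst i z))

/-- The action of the Hecke algebra on the space `Hh` of all formal (possibly infinite)
sums `∑ c_x T_x`, described in coordinates: the `x`-coordinate of `h • ξ` is
`∑ᶠ y, ξ_y ⬝ (coefficient of T_x in h ⬝ T_y)`. -/
def IsHatAction {R H : Type*} [CommRing R] [Ring H] [Algebra R H] (T : Module.Basis W R H)
    {Hh : Type*} [AddCommGroup Hh] [Module R Hh] [Module H Hh]
    (coords : Hh ≃ₗ[R] (W → R)) : Prop :=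
  ∀ (h : H) (ξ : Hh) (x : W), coords (h • ξ) x = ∑ᶠ y : W, coords ξ y * (T.repr (h * T y) x)

/-- The `R`-span (for a subring `R ⊆ ℚ(u)`) of a family of vectors in a `ℚ(u)`-vector
space; used for the various integral forms. -/
def MA {ι V : Type*} [AddCommGroup V] [Module Fq V] (R : Subring Fq) (v : ι → V) :
    Submodule (↥R) V :=
  Submodule.span (↥R) (Set.range v)

/-- The canonical element `1 ⊗ v z` of the base change `K ⊗_R (R-span of v)`. -/
def bce {ι V : Type*} [AddCommGroup V] [Module Fq V] (R : Subring Fq) (K : Type*)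
    [CommRing K] [Algebra (↥R) K] (v : ι → V) (z : ι) :
    TensorProduct (↥R) K ↥(MA R v) :=
  (1 : K) ⊗ₜ[↥R] (⟨v z, Submodule.subset_span (Set.mem_range_self z)⟩ : ↥(MA R v))

/-- Right multiplication/action on a fixed element `Ξ` (e.g. `X_∅`), as a
`ℚ(u)`-linear map `h ↦ h • Ξ`. -/
def smulXeF {H V : Type*} [Ring H] [Algebra Fq H] [AddCommGroup V] [Module Fq V]
    [Module H V] [IsScalarTower Fq H V] (Ξ : V) : H →ₗ[Fq] V where
  toFun h := h • Ξ
  map_add' h h' := add_smul h h' Ξ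
  map_smul' c h := by simp [smul_assoc]

/-- The integral form `H_{R,u} X_∅`: the image of the `R`-span of the `T_w` under
`h ↦ h • Ξ`. -/
def NX {ι H V : Type*} [Ring H] [Algebra Fq H] [AddCommGroup V] [Module Fq V]
    [Module H V] [IsScalarTower Fq H V] (R : Subring Fq) (Tv : ι → H) (Ξ : V) :
    Submodule (↥R) V :=
  Submodule.map ((smulXeF Ξ).restrictScalars (↥R)) (Submodule.span (↥R) (Set.range Tv))

/-!
Write `x ⋆ y` for the Demazure product. By induction along a reduced `I⋆`-expression
`(s₁, …, sₖ)` of `z`, the word `s₁⋯sₖ` is reduced and `z = σ_z ⋆ (σ_z⁻¹)^*`, so `z` is determined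
by `σ_z`. The inductive step needs `s₁` to be an ascent of `y = s₂ ⋉ ⋯ ⋉ sₖ ⋉ 1 = σ ⋆ (σ⁻¹)^*`,
where `σ = s₂⋯sₖ`: otherwise `s₁ ⋉ y ≤ y`, and the lifting property of the Bruhat order,
transported to twisted involutions, gives every twisted involution below `σ ⋆ (σ⁻¹)^*` an
`I⋆`-expression of length at most `ℓ σ < k`, contradicting minimality. That the Demazure product of
a reduced word depends only on its value follows from the subword property, which rests on the
strong exchange condition, proved with Tits' representation of `W` on `W × ℤ/2`.
-/

section CoxeterGroup

local prefix:100 "s " => cs.simple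
local prefix:100 "π " => cs.wordProd
local prefix:100 "ℓ " => cs.length
local prefix:100 "ris " => cs.rightInvSeq

/-! ### Tits' representation and the strong exchange condition -/

lemma simple_mul_mul_simple_eq_simple_iff (i : B) (t : W) : s i * t * s i = s i ↔ t = s i := by
  constructor
  · intro h
    simpa [mul_assoc] using congrArg (fun x => s i * (x * s i)) h
  · rintro rfl
    simp

/-- Tits' action of `s i` on `W × ZMod 2`, whose second coordinate records the parity of the
number of times a reflection occurs in a right inversion sequence. -/
def parityPerm (i : B) : Equiv.Perm (W × ZMod 2) :=
  Function.Involutive.toPerm (fun p => (s i * p.1 * s i, p.2 + if p.1 = s i then 1 else 0)) <| by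
    rintro ⟨t, ε⟩
    refine Prod.ext (by simp [mul_assoc]) ?_
    show ε + _ + _ = ε
    rw [simple_mul_mul_simple_eq_simple_iff]
    split_ifs <;> simp [add_assoc, CharTwo.add_self_eq_zero]

lemma parityPerm_apply (i : B) (t : W) (ε : ZMod 2) :
    parityPerm cs i (t, ε) = (s i * t * s i, ε + if t = s i then 1 else 0) := rfl

lemma conj_pow_mul_simple (i i' : B) (k : ℕ) :
    (s i * s i')⁻¹ * ((s i' * s i) ^ k * s i') * (s i * s i') = (s i' * s i) ^ (k + 2) * s i' := by
  rw [mul_inv_rev, cs.inv_simple, cs.inv_simple, pow_succ, pow_succ']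
  simp only [mul_assoc]

lemma parityPerm_mul_pow_apply (i i' : B) (n : ℕ) (t : W) (ε : ZMod 2) :
    ((parityPerm cs i * parityPerm cs i') ^ n) (t, ε) =
      ((s i * s i') ^ n * t * ((s i * s i') ^ n)⁻¹,
        ε + ∑ k ∈ Finset.range (2 * n), if t = (s i' * s i) ^ k * s i' then 1 else 0) := by
  induction n generalizing t ε with
  | zero => simp
  | succ n ih =>
    have hshift (k : ℕ) : s i * (s i' * t * s i') * s i = (s i' * s i) ^ k * s i' ↔
        t = (s i' * s i) ^ (k + 2) * s i' := by
      rw [← conj_pow_mul_simple]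
      constructor <;> intro h
      · rw [← h, mul_inv_rev, cs.inv_simple, cs.inv_simple]; simp [mul_assoc]
      · rw [h, mul_inv_rev, cs.inv_simple, cs.inv_simple]; simp [mul_assoc]
    have hfirst : s i' * t * s i' = s i ↔ t = (s i' * s i) ^ 1 * s i' := by
      constructor
      · intro h; rw [← h]; simp [mul_assoc]
      · rintro rfl; simp [mul_assoc]
    rw [pow_succ, Equiv.Perm.mul_apply, Equiv.Perm.mul_apply, parityPerm_apply, parityPerm_apply,
      ih]
    refine Prod.ext (by simp only [pow_succ, mul_inv_rev, cs.inv_simple, mul_assoc]) ?_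
    simp only [hshift, hfirst]
    rw [mul_add, mul_one, Finset.sum_range_succ', Finset.sum_range_succ', pow_zero, one_mul]
    ring

lemma parityPerm_liftable : M.IsLiftable (parityPerm cs) := by
  intro i i'
  ext ⟨t, ε⟩ : 1
  have hperiod (k : ℕ) : (s i' * s i) ^ (M i i' + k) * s i' = (s i' * s i) ^ k * s i' := by
    rw [pow_add, cs.simple_mul_simple_pow', one_mul]
  rw [parityPerm_mul_pow_apply, cs.simple_mul_simple_pow, two_mul, Finset.sum_range_add]
  simp only [hperiod, CharTwo.add_self_eq_zero]
  simp

def parityRep : W →* Equiv.Perm (W × ZMod 2) := cs.lift ⟨parityPerm cs, parityPerm_liftable cs⟩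

lemma parityRep_wordProd_apply (ω : List B) (t : W) (ε : ZMod 2) :
    parityRep cs (π ω) (t, ε) = (π ω * t * (π ω)⁻¹, ε + (ris ω).count t) := by
  induction ω generalizing t ε with
  | nil => simp
  | cons i ω ih =>
    have hmem : ((π ω)⁻¹ * s i * π ω == t) = true ↔ π ω * t * (π ω)⁻¹ = s i := by
      rw [beq_iff_eq]
      constructor
      · rintro rfl; group
      · intro h; rw [← h]; group
    rw [cs.wordProd_cons, map_mul, Equiv.Perm.mul_apply, ih, parityRep,
      cs.lift_apply_simple, parityPerm_apply]
    show _ = (_, _ + (((π ω)⁻¹ * s i * π ω :: ris ω).count t : ZMod 2))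
    rw [List.count_cons, Nat.cast_add]
    simp only [hmem]
    refine Prod.ext (by simp [mul_assoc]) ?_
    split_ifs <;> simp [add_assoc]

/-- The parity of the number of occurrences of `t` in the right inversion sequence of any word
for `w`. -/
def invParity (w t : W) : ZMod 2 := (parityRep cs w (t, 0)).2

lemma invParity_wordProd (ω : List B) (t : W) : invParity cs (π ω) t = (ris ω).count t := by
  simp [invParity, parityRep_wordProd_apply]

lemma parityRep_apply (w t : W) (ε : ZMod 2) :
    parityRep cs w (t, ε) = (w * t * w⁻¹, ε + invParity cs w t) := by
  obtain ⟨ω, rfl⟩ := cs.wordProd_surjective w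
  rw [parityRep_wordProd_apply, invParity_wordProd]

lemma invParity_mul (w₁ w₂ t : W) :
    invParity cs (w₁ * w₂) t = invParity cs w₂ t + invParity cs w₁ (w₂ * t * w₂⁻¹) := by
  rw [invParity, map_mul, Equiv.Perm.mul_apply, parityRep_apply cs w₂, parityRep_apply, zero_add]

lemma invParity_one (t : W) : invParity cs 1 t = 0 := by
  simp [invParity]

lemma invParity_simple_self (i : B) : invParity cs (s i) (s i) = 1 := by
  simpa using invParity_wordProd cs [i] (s i)

lemma invParity_self {t : W} (ht : cs.IsReflection t) : invParity cs t t = 1 := by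
  obtain ⟨w, i, rfl⟩ := ht
  have hconj : w⁻¹ * (w * s i * w⁻¹) * w⁻¹⁻¹ = s i := by group
  have hinv := invParity_mul cs w w⁻¹ (w * s i * w⁻¹)
  rw [mul_inv_cancel, invParity_one, hconj] at hinv
  rw [invParity_mul cs (w * s i) w⁻¹, hconj, invParity_mul cs w (s i),
    show s i * s i * (s i)⁻¹ = s i by group, invParity_simple_self]
  linear_combination (-1 : ZMod 2) * hinv

/-- The strong exchange condition. -/
theorem mem_rightInvSeq_of_isRightInversion {ω : List B} {t : W}
    (h : cs.IsRightInversion (π ω) t) : t ∈ ris ω := by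
  obtain ⟨α, hα, hαt⟩ := cs.exists_isReduced (π ω * t)
  have hnot : t ∉ ris α := fun hmem => by
    have := (cs.isRightInversion_of_mem_rightInvSeq hα hmem).2
    rw [← hαt, mul_assoc, h.1.mul_self, mul_one] at this
    exact absurd h.2 (by omega)
  have hα0 : invParity cs (π ω * t) t = 0 := by
    rw [hαt, invParity_wordProd, List.count_eq_zero.mpr hnot, Nat.cast_zero]
  have hω : invParity cs (π ω) t = 1 := by
    have := invParity_mul cs (π ω * t) t t
    rwa [mul_assoc, h.1.mul_self, mul_one, one_mul, h.1.inv, invParity_self cs h.1, hα0,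
      add_zero] at this
  rw [← List.count_pos_iff, Nat.pos_iff_ne_zero]
  intro h0
  rw [invParity_wordProd, h0, Nat.cast_zero] at hω
  exact zero_ne_one hω

theorem exists_eraseIdx_of_isRightInversion {ω : List B} {t : W}
    (h : cs.IsRightInversion (π ω) t) : ∃ j < ω.length, π ω * t = π (ω.eraseIdx j) := by
  obtain ⟨j, hj, rfl⟩ := List.mem_iff_getElem.mp (mem_rightInvSeq_of_isRightInversion cs h)
  rw [cs.length_rightInvSeq] at hj
  exact ⟨j, hj, by rw [← List.getD_eq_getElem _ 1, cs.wordProd_mul_getD_rightInvSeq]⟩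

/-! ### The Bruhat order and the lifting property -/

def BruhatStep (u v : W) : Prop := ∃ t, cs.IsReflection t ∧ u = v * t ∧ ℓ u < ℓ v

/-- The Bruhat order; by the subword property it agrees with `BruhatLE`. -/
def BruhatChainLE : W → W → Prop := Relation.ReflTransGen (BruhatStep cs)

local infix:50 " ≤ᵇ " => BruhatChainLE cs

lemma bruhat_refl (w : W) : w ≤ᵇ w := Relation.ReflTransGen.refl

lemma bruhat_trans {u v w : W} (huv : u ≤ᵇ v) (hvw : v ≤ᵇ w) : u ≤ᵇ w :=
  Relation.ReflTransGen.trans huv hvw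

lemma bruhat_of_step {u v : W} (h : BruhatStep cs u v) : u ≤ᵇ v := Relation.ReflTransGen.single h

lemma eq_or_length_lt_of_bruhat {u v : W} (h : u ≤ᵇ v) : u = v ∨ ℓ u < ℓ v := by
  induction h with
  | refl => exact Or.inl rfl
  | tail _ hstep ih =>
    obtain ⟨t, -, -, hlt⟩ := hstep
    rcases ih with rfl | h
    · exact Or.inr hlt
    · exact Or.inr (h.trans hlt)

lemma length_le_of_bruhat {u v : W} (h : u ≤ᵇ v) : ℓ u ≤ ℓ v := by
  rcases eq_or_length_lt_of_bruhat cs h with rfl | h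
  · exact le_rfl
  · exact h.le

lemma bruhat_antisymm {u v : W} (huv : u ≤ᵇ v) (hvu : v ≤ᵇ u) : u = v :=
  (eq_or_length_lt_of_bruhat cs huv).resolve_right (length_le_of_bruhat cs hvu).not_gt

lemma bruhat_inv {u v : W} (h : u ≤ᵇ v) : u⁻¹ ≤ᵇ v⁻¹ := by
  induction h with
  | refl => exact bruhat_refl cs _
  | @tail b c _ hstep ih =>
    obtain ⟨t, ht, rfl, hlt⟩ := hstep
    refine bruhat_trans cs ih (bruhat_of_step cs ⟨c * t * c⁻¹, ht.conj c, ?_, ?_⟩)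
    · rw [mul_inv_rev, ht.inv]; group
    rwa [cs.length_inv, cs.length_inv]

lemma mul_simple_bruhat {w : W} {i : B} (h : cs.IsRightDescent w i) : w * s i ≤ᵇ w :=
  bruhat_of_step cs ⟨s i, cs.isReflection_simple i, rfl, h⟩

lemma bruhat_mul_simple {w : W} {i : B} (h : ¬ cs.IsRightDescent w i) : w ≤ᵇ w * s i := by
  refine bruhat_of_step cs ⟨s i, cs.isReflection_simple i, by simp, ?_⟩
  rw [cs.not_isRightDescent_iff.mp h]
  omega

lemma simple_mul_bruhat {w : W} {i : B} (h : cs.IsLeftDescent w i) : s i * w ≤ᵇ w := by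
  simpa using bruhat_inv cs (mul_simple_bruhat cs (cs.isRightDescent_inv_iff.mpr h))

lemma bruhat_simple_mul {w : W} {i : B} (h : ¬ cs.IsLeftDescent w i) : w ≤ᵇ s i * w := by
  simpa using bruhat_inv cs (bruhat_mul_simple cs (mt cs.isRightDescent_inv_iff.mp h))

/-- One half of the lifting property. -/
theorem bruhat_simple_mul_of_bruhat {u v : W} {i : B} (hle : u ≤ᵇ v)
    (hv : cs.IsLeftDescent v i) (hu : ¬ cs.IsLeftDescent u i) : u ≤ᵇ s i * v := by
  induction hle with
  | refl => exact absurd hv hu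
  | @tail v₁ v hle hstep ih =>
    obtain ⟨t, ht, rfl, hlt⟩ := hstep
    have hv' := cs.isLeftDescent_iff.mp hv
    by_cases hv₁ : cs.IsLeftDescent (v * t) i
    · refine bruhat_trans cs (ih hv₁) (bruhat_of_step cs ⟨t, ht, by group, ?_⟩)
      have := cs.isLeftDescent_iff.mp hv₁
      omega
    obtain ⟨α, hα, hαv⟩ := cs.exists_isReduced (s i * v)
    have hv'' : π (i :: α) = v := by rw [cs.wordProd_cons, ← hαv, cs.simple_mul_simple_cancel_left]
    obtain ⟨j, hj, hvt⟩ :=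
      exists_eraseIdx_of_isRightInversion cs (ω := i :: α) ⟨ht, by rwa [hv'']⟩
    rw [hv''] at hvt
    cases j with
    | zero =>
      rw [List.eraseIdx_cons_zero, ← hαv] at hvt
      rwa [← hvt]
    | succ j =>
      rw [List.eraseIdx_cons_succ, cs.wordProd_cons] at hvt
      have hlen : ℓ (s i * (v * t)) < ℓ (s i * v) := by
        have h1 := cs.length_wordProd_le (α.eraseIdx j)
        have h2 := List.length_eraseIdx_add_one (l := α) (i := j) (by simpa using hj)
        rw [hvt, cs.simple_mul_simple_cancel_left]
        rw [hαv, hα.eq]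
        omega
      exact bruhat_trans cs hle <| bruhat_trans cs (bruhat_simple_mul cs hv₁) <|
        bruhat_of_step cs ⟨t, ht, by group, hlen⟩

/-- The other half of the lifting property. -/
theorem simple_mul_bruhat_simple_mul {u v : W} {i : B} (hle : u ≤ᵇ v)
    (hv : ¬ cs.IsLeftDescent v i) (hu : ¬ cs.IsLeftDescent u i) : s i * u ≤ᵇ s i * v := by
  induction hn : ℓ v using Nat.strong_induction_on generalizing v with
  | _ n ih =>
  rcases Relation.ReflTransGen.cases_tail hle with rfl | ⟨_, hle₁, t, ht, rfl, hlt⟩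
  · exact bruhat_refl cs _
  have hv' := cs.not_isLeftDescent_iff.mp hv
  by_cases hv₁ : cs.IsLeftDescent (v * t) i
  · have hv₁' := cs.isLeftDescent_iff.mp hv₁
    have h := ih _ (by omega) (bruhat_simple_mul_of_bruhat cs hle₁ hv₁ hu)
      (cs.isLeftDescent_iff_not_isLeftDescent_mul.mp hv₁) rfl
    rw [cs.simple_mul_simple_cancel_left] at h
    exact bruhat_trans cs h <| bruhat_trans cs (bruhat_of_step cs ⟨t, ht, rfl, hlt⟩) <|
      bruhat_simple_mul cs hv
  · have hv₁' := cs.not_isLeftDescent_iff.mp hv₁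
    exact bruhat_trans cs (ih _ (by omega) hle₁ hv₁ rfl)
      (bruhat_of_step cs ⟨t, ht, by group, by omega⟩)

theorem simple_mul_bruhat_of_bruhat {u v : W} {i : B} (hle : u ≤ᵇ v)
    (hv : cs.IsLeftDescent v i) : s i * u ≤ᵇ v := by
  by_cases hu : cs.IsLeftDescent u i
  · exact bruhat_trans cs (simple_mul_bruhat cs hu) hle
  · simpa using simple_mul_bruhat_simple_mul cs (bruhat_simple_mul_of_bruhat cs hle hv hu)
      (cs.isLeftDescent_iff_not_isLeftDescent_mul.mp hv) hu

lemma inv_mul_simple_eq (w : W) (i : B) : (w * s i)⁻¹ = s i * w⁻¹ := by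
  rw [mul_inv_rev, cs.inv_simple]

theorem bruhat_mul_simple_of_bruhat {u v : W} {i : B} (hle : u ≤ᵇ v)
    (hv : cs.IsRightDescent v i) (hu : ¬ cs.IsRightDescent u i) : u ≤ᵇ v * s i := by
  have h := bruhat_simple_mul_of_bruhat cs (bruhat_inv cs hle) (cs.isLeftDescent_inv_iff.mpr hv)
    (mt cs.isLeftDescent_inv_iff.mp hu)
  simpa only [← inv_mul_simple_eq, inv_inv] using bruhat_inv cs h

theorem mul_simple_bruhat_mul_simple {u v : W} {i : B} (hle : u ≤ᵇ v)
    (hv : ¬ cs.IsRightDescent v i) (hu : ¬ cs.IsRightDescent u i) : u * s i ≤ᵇ v * s i := by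
  have h := simple_mul_bruhat_simple_mul cs (bruhat_inv cs hle)
    (mt cs.isLeftDescent_inv_iff.mp hv) (mt cs.isLeftDescent_inv_iff.mp hu)
  simpa only [← inv_mul_simple_eq, inv_inv] using bruhat_inv cs h

theorem mul_simple_bruhat_of_bruhat {u v : W} {i : B} (hle : u ≤ᵇ v)
    (hv : cs.IsRightDescent v i) : u * s i ≤ᵇ v := by
  have h := simple_mul_bruhat_of_bruhat cs (bruhat_inv cs hle) (cs.isLeftDescent_inv_iff.mpr hv)
  simpa only [← inv_mul_simple_eq, inv_inv] using bruhat_inv cs h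

/-- One direction of the subword property. -/
theorem exists_sublist_of_bruhat {u v : W} (h : u ≤ᵇ v) {η : List B} (hη : π η = v) :
    ∃ κ : List B, κ.Sublist η ∧ π κ = u := by
  induction h generalizing η with
  | refl => exact ⟨η, List.Sublist.refl _, hη⟩
  | tail _ hstep ih =>
    obtain ⟨t, ht, rfl, hlt⟩ := hstep
    obtain ⟨j, -, hj⟩ := exists_eraseIdx_of_isRightInversion cs (ω := η) ⟨ht, by rwa [hη]⟩
    obtain ⟨κ, hκ, hκu⟩ := ih (η := η.eraseIdx j) (by rw [← hj, hη])
    exact ⟨κ, hκ.trans (List.eraseIdx_sublist _ _), hκu⟩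

theorem simple_mul_eq_mul_simple_of_isDescent {w : W} {i j : B} (hi : cs.IsLeftDescent w i)
    (hj : cs.IsRightDescent w j) (hlen : ℓ (s i * w * s j) = ℓ w) : s i * w = w * s j := by
  obtain ⟨α, hα, hαw⟩ := cs.exists_isReduced (s i * w)
  have hw : π (i :: α) = w := by rw [cs.wordProd_cons, ← hαw, cs.simple_mul_simple_cancel_left]
  obtain ⟨p, hp, hwj⟩ := exists_eraseIdx_of_isRightInversion cs (ω := i :: α)
    ⟨cs.isReflection_simple j, by rwa [hw]⟩
  rw [hw] at hwj
  cases p with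
  | zero => rw [hwj, List.eraseIdx_cons_zero, ← hαw]
  | succ q =>
    rw [List.eraseIdx_cons_succ, cs.wordProd_cons] at hwj
    have h1 := cs.length_wordProd_le (α.eraseIdx q)
    have h2 := List.length_eraseIdx_add_one (l := α) (i := q) (by simpa using hp)
    have h3 := cs.isLeftDescent_iff.mp hi
    rw [mul_assoc, hwj, cs.simple_mul_simple_cancel_left] at hlen
    rw [hαw, hα.eq] at h3
    omega

theorem simple_mul_eq_mul_simple_of_not_isDescent {w : W} {i j : B}
    (hi : ¬ cs.IsLeftDescent w i) (hj : ¬ cs.IsRightDescent w j)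
    (hlen : ℓ (s i * w * s j) = ℓ w) : s i * w = w * s j := by
  have hi' := cs.not_isLeftDescent_iff.mp hi
  have h := simple_mul_eq_mul_simple_of_isDescent cs (w := s i * w) (i := i) (j := j)
    (by rw [cs.isLeftDescent_iff, cs.simple_mul_simple_cancel_left]; omega)
    (by show ℓ (s i * w * s j) < ℓ (s i * w); omega)
    (by rw [cs.simple_mul_simple_cancel_left, cs.not_isRightDescent_iff.mp hj]; omega)
  rw [cs.simple_mul_simple_cancel_left] at h
  calc s i * w = s i * (s i * w * s j) := congrArg _ h
    _ = w * s j := by rw [mul_assoc, cs.simple_mul_simple_cancel_left]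

/-! ### Demazure products -/

/-- `upL i x` and `downL i x` are the larger and the smaller of `x` and `s i * x` (so `upL i x` is
the Demazure product `s i ⋆ x`); `upR` and `downR` are their right-handed analogues. -/
def upL (i : B) (x : W) : W := if cs.IsLeftDescent x i then x else s i * x

def upR (x : W) (j : B) : W := if cs.IsRightDescent x j then x else x * s j

def downL (i : B) (x : W) : W := if cs.IsLeftDescent x i then s i * x else x

def downR (x : W) (j : B) : W := if cs.IsRightDescent x j then x * s j else x

lemma upL_eq_self_iff {i : B} {x : W} : upL cs i x = x ↔ cs.IsLeftDescent x i := by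
  unfold upL
  split_ifs with h
  · simpa using h
  · simp only [h, iff_false]
    intro e
    have := cs.not_isLeftDescent_iff.mp h
    rw [e] at this
    omega

lemma bruhat_upR (x : W) (j : B) : x ≤ᵇ upR cs x j := by
  unfold upR
  split_ifs with h
  · exact bruhat_refl cs x
  · exact bruhat_mul_simple cs h

lemma mul_simple_bruhat_upR (x : W) (j : B) : x * s j ≤ᵇ upR cs x j := by
  unfold upR
  split_ifs with h
  · exact mul_simple_bruhat cs h
  · exact bruhat_refl cs _

lemma upR_mono {u v : W} (h : u ≤ᵇ v) (j : B) : upR cs u j ≤ᵇ upR cs v j := by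
  unfold upR
  split_ifs with hu hv hv
  · exact h
  · exact bruhat_trans cs h (bruhat_mul_simple cs hv)
  · exact mul_simple_bruhat_of_bruhat cs h hv
  · exact mul_simple_bruhat_mul_simple cs h hv hu

lemma downL_mono {u v : W} (h : u ≤ᵇ v) (i : B) : downL cs i u ≤ᵇ downL cs i v := by
  unfold downL
  split_ifs with hu hv hv
  · have := simple_mul_bruhat_of_bruhat cs h hv
    simpa using bruhat_simple_mul_of_bruhat cs this hv
      (cs.isLeftDescent_iff_not_isLeftDescent_mul.mp hu)
  · exact bruhat_trans cs (simple_mul_bruhat cs hu) h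
  · exact bruhat_simple_mul_of_bruhat cs h hv hu
  · exact h

lemma downR_mono {u v : W} (h : u ≤ᵇ v) (j : B) : downR cs u j ≤ᵇ downR cs v j := by
  unfold downR
  split_ifs with hu hv hv
  · have := mul_simple_bruhat_of_bruhat cs h hv
    simpa using bruhat_mul_simple_of_bruhat cs this hv
      (cs.isRightDescent_iff_not_isRightDescent_mul.mp hu)
  · exact bruhat_trans cs (mul_simple_bruhat cs hu) h
  · exact bruhat_mul_simple_of_bruhat cs h hv hu
  · exact h

lemma downL_bruhat (i : B) (x : W) : downL cs i x ≤ᵇ x := by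
  unfold downL
  split_ifs with h
  · exact simple_mul_bruhat cs h
  · exact bruhat_refl cs x

lemma downR_bruhat (x : W) (j : B) : downR cs x j ≤ᵇ x := by
  unfold downR
  split_ifs with h
  · exact mul_simple_bruhat cs h
  · exact bruhat_refl cs x

lemma upL_upR_comm (i j : B) (x : W) : upL cs i (upR cs x j) = upR cs (upL cs i x) j := by
  unfold upL upR
  by_cases hi : cs.IsLeftDescent x i <;> by_cases hj : cs.IsRightDescent x j <;>
    simp only [hi, hj, if_true, if_false]
  · rw [if_pos]
    have := cs.isLeftDescent_iff.mp hi
    have := cs.not_isRightDescent_iff.mp hj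
    have := cs.length_mul_simple (s i * x) j
    show ℓ (s i * (x * s j)) < ℓ (x * s j)
    rw [← mul_assoc]
    omega
  · rw [if_pos]
    have := cs.not_isLeftDescent_iff.mp hi
    have := cs.isRightDescent_iff.mp hj
    have := cs.length_simple_mul (x * s j) i
    show ℓ (s i * x * s j) < ℓ (s i * x)
    rw [mul_assoc]
    omega
  · have hi' := cs.not_isLeftDescent_iff.mp hi
    have hj' := cs.not_isRightDescent_iff.mp hj
    rcases cs.length_mul_simple (s i * x) j with hlen | hlen
    · rw [if_neg, if_neg, mul_assoc]
      · show ¬ ℓ (s i * x * s j) < ℓ (s i * x)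
        omega
      · show ¬ ℓ (s i * (x * s j)) < ℓ (x * s j)
        rw [← mul_assoc]
        omega
    · have hcomm := simple_mul_eq_mul_simple_of_not_isDescent cs hi hj (by omega)
      rw [if_pos, if_pos, hcomm]
      · show ℓ (s i * x * s j) < ℓ (s i * x)
        omega
      · show ℓ (s i * (x * s j)) < ℓ (x * s j)
        rw [← mul_assoc]
        omega

/-- The Demazure product `x ⋆ s_{j₁} ⋆ ⋯ ⋆ s_{jₖ}` for `η = [j₁, …, jₖ]`. -/
def demazureFold (x : W) (η : List B) : W := η.foldl (upR cs) x

lemma demazureFold_append_singleton (x : W) (η : List B) (c : B) :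
    demazureFold cs x (η ++ [c]) = upR cs (demazureFold cs x η) c := by
  simp [demazureFold]

lemma upL_demazureFold (i : B) (x : W) (η : List B) :
    upL cs i (demazureFold cs x η) = demazureFold cs (upL cs i x) η := by
  induction η generalizing x with
  | nil => rfl
  | cons c η ih => exact (ih _).trans (congrArg (demazureFold cs · η) (upL_upR_comm cs i c x))

lemma demazureFold_one_of_isReduced {η : List B} (hη : cs.IsReduced η) :
    demazureFold cs 1 η = π η := by
  induction η using List.reverseRecOn with
  | nil => rfl
  | append_singleton η c ih =>
    have hη' : cs.IsReduced η := by simpa using hη.take η.length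
    have hlen := hη.eq
    rw [demazureFold_append_singleton, ih hη', upR, if_neg, cs.wordProd_append,
      cs.wordProd_singleton]
    rw [cs.wordProd_append, cs.wordProd_singleton, List.length_append] at hlen
    show ¬ ℓ (π η * s c) < ℓ (π η)
    rw [hlen, hη'.eq]
    simp

lemma exists_sublist_demazureFold_eq (x : W) (η : List B) :
    ∃ κ : List B, κ.Sublist η ∧ demazureFold cs x η = x * π κ := by
  induction η using List.reverseRecOn with
  | nil => exact ⟨[], List.Sublist.refl _, by simp [demazureFold]⟩
  | append_singleton η c ih =>
    obtain ⟨κ, hκ, hfold⟩ := ih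
    rw [demazureFold_append_singleton, hfold, upR]
    split_ifs
    · exact ⟨κ, hκ.trans (List.sublist_append_left η [c]), rfl⟩
    · exact ⟨κ ++ [c], hκ.append_right [c] |>.trans (by simp), by
        rw [cs.wordProd_append, cs.wordProd_singleton, mul_assoc]⟩

lemma sublist_append_singleton_cases {α : Type*} {κ η : List α} {c : α}
    (h : κ.Sublist (η ++ [c])) : κ.Sublist η ∨ ∃ κ', κ = κ' ++ [c] ∧ κ'.Sublist η := by
  rcases List.sublist_append_iff.mp h with ⟨a, b, rfl, ha, hb⟩
  cases hb with
  | cons _ h' => exact Or.inl (by simpa [List.sublist_nil.mp h'] using ha)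
  | cons_cons _ h' => exact Or.inr ⟨a, by rw [List.sublist_nil.mp h'], ha⟩

lemma bruhat_demazureFold (x : W) {κ η : List B} (h : κ.Sublist η) :
    x * π κ ≤ᵇ demazureFold cs x η := by
  induction η using List.reverseRecOn generalizing κ with
  | nil =>
    rw [List.sublist_nil.mp h]
    simpa [demazureFold] using bruhat_refl cs x
  | append_singleton η c ih =>
    rw [demazureFold_append_singleton]
    rcases sublist_append_singleton_cases h with hκ | ⟨κ', rfl, hκ'⟩
    · exact bruhat_trans cs (ih hκ) (bruhat_upR cs _ c)
    · rw [cs.wordProd_append, cs.wordProd_singleton, ← mul_assoc]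
      exact bruhat_trans cs (mul_simple_bruhat_upR cs _ c) (upR_mono cs (ih hκ') c)

theorem demazureFold_congr {η₁ η₂ : List B} (h₁ : cs.IsReduced η₁) (h₂ : cs.IsReduced η₂)
    (h : π η₁ = π η₂) (x : W) : demazureFold cs x η₁ = demazureFold cs x η₂ := by
  have key {η₁ η₂ : List B} (h₁ : cs.IsReduced η₁) (h : π η₁ = π η₂) :
      demazureFold cs x η₁ ≤ᵇ demazureFold cs x η₂ := by
    obtain ⟨κ, hκ, hfold⟩ := exists_sublist_demazureFold_eq cs x η₁
    have hle : π κ ≤ᵇ π η₂ := by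
      simpa [demazureFold_one_of_isReduced cs h₁, h] using bruhat_demazureFold cs 1 hκ
    obtain ⟨κ', hκ', hκκ'⟩ := exists_sublist_of_bruhat cs hle rfl
    rw [hfold, ← hκκ']
    exact bruhat_demazureFold cs x hκ'
  exact bruhat_antisymm cs (key h₁ h) (key h₂ h.symm)

lemma induction_on_isLeftDescent {p : W → Prop} (one : p 1)
    (step : ∀ v i, cs.IsLeftDescent v i → p (s i * v) → p v) (v : W) : p v := by
  induction hn : ℓ v generalizing v with
  | zero => rwa [cs.length_eq_zero_iff.mp hn]
  | succ n ih =>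
    obtain ⟨i, hi⟩ := cs.exists_leftDescent_of_ne_one (w := v) (by rintro rfl; simp at hn)
    exact step v i hi (ih _ (by have := cs.isLeftDescent_iff.mp hi; omega))

end CoxeterGroup

/-! ### Twisted involutions -/

section TwistedInvolutions

local prefix:100 "s " => cs.simple
local prefix:100 "π " => cs.wordProd
local prefix:100 "ℓ " => cs.length
local infix:50 " ≤ᵇ " => BruhatChainLE cs

variable {star}

lemma exists_wordProd_eq_star (hS : ∀ i : B, ∃ j : B, star (s i) = s j) (ω : List B) :
    ∃ ω' : List B, ω'.length = ω.length ∧ star (π ω) = π ω' := by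
  induction ω with
  | nil => exact ⟨[], rfl, by simp⟩
  | cons i ω ih =>
    obtain ⟨ω', hlen, hω'⟩ := ih
    obtain ⟨j, hj⟩ := hS i
    exact ⟨j :: ω', by simp [hlen], by rw [cs.wordProd_cons, map_mul, hj, hω', cs.wordProd_cons]⟩

lemma length_star (hst : ∀ v : W, star (star v) = v) (hS : ∀ i : B, ∃ j : B, star (s i) = s j)
    (w : W) : ℓ (star w) = ℓ w := by
  have hle (v : W) : ℓ (star v) ≤ ℓ v := by
    obtain ⟨ω, hω, rfl⟩ := cs.exists_isReduced v
    obtain ⟨ω', hlen, hω'⟩ := exists_wordProd_eq_star cs hS ω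
    rw [hω', hω.eq, ← hlen]
    exact cs.length_wordProd_le ω'
  exact le_antisymm (hle w) (by simpa [hst] using hle (star w))

lemma twMul_twMul (i : B) (x : W) : twMul cs star i (twMul cs star i x) = x := by
  have hss : star (s i) * star (s i) = 1 := by rw [← map_mul, cs.simple_mul_simple_self, map_one]
  unfold twMul
  by_cases hcomm : s i * x = x * star (s i)
  · rw [if_pos hcomm, if_pos (by rw [cs.simple_mul_simple_cancel_left, mul_assoc, ← hcomm,
      ← mul_assoc, cs.simple_mul_simple_self, one_mul]), cs.simple_mul_simple_cancel_left]
  · have e1 : s i * (s i * x * star (s i)) = x * star (s i) := by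
      rw [mul_assoc, cs.simple_mul_simple_cancel_left]
    have e2 : s i * x * star (s i) * star (s i) = s i * x := by rw [mul_assoc, hss, mul_one]
    rw [if_neg hcomm, e1, e2, if_neg (Ne.symm hcomm), mul_assoc, hss, mul_one]

section
variable (hst : ∀ v : W, star (star v) = v)
  (hS : ∀ i : B, ∃ j : B, star (cs.simple i) = cs.simple j)
  {x : W} (hx : star x = x⁻¹) {i j : B} (hj : star (cs.simple i) = cs.simple j)
include hst hS hx hj

lemma length_mul_simple_eq_length_simple_mul : ℓ (x * s j) = ℓ (s i * x) := by
  rw [← hj, ← length_star cs hst hS, map_mul, hx, hst, ← cs.length_inv, mul_inv_rev, inv_inv,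
    cs.inv_simple]

lemma isRightDescent_iff_isLeftDescent : cs.IsRightDescent x j ↔ cs.IsLeftDescent x i := by
  rw [CoxeterSystem.IsRightDescent, CoxeterSystem.IsLeftDescent,
    length_mul_simple_eq_length_simple_mul cs hst hS hx hj]

lemma length_simple_mul_mul_simple_of_not_isLeftDescent (hne : s i * x ≠ x * s j)
    (hi : ¬ cs.IsLeftDescent x i) : ℓ (s i * x * s j) = ℓ x + 2 := by
  have hi' := cs.not_isLeftDescent_iff.mp hi
  have hj' := length_mul_simple_eq_length_simple_mul cs hst hS hx hj
  rcases cs.length_mul_simple (s i * x) j with h | h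
  · omega
  · exact absurd (simple_mul_eq_mul_simple_of_not_isDescent cs hi
      (mt (isRightDescent_iff_isLeftDescent cs hst hS hx hj).mp hi) (by omega)) hne

lemma length_simple_mul_mul_simple_of_isLeftDescent (hne : s i * x ≠ x * s j)
    (hi : cs.IsLeftDescent x i) : ℓ (s i * x * s j) + 2 = ℓ x := by
  have hi' := cs.isLeftDescent_iff.mp hi
  have hj' := length_mul_simple_eq_length_simple_mul cs hst hS hx hj
  rcases cs.length_mul_simple (s i * x) j with h | h
  · exact absurd (simple_mul_eq_mul_simple_of_isDescent cs hi
      ((isRightDescent_iff_isLeftDescent cs hst hS hx hj).mpr hi) (by omega)) hne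
  · omega

lemma upR_upL_of_not_isLeftDescent (hi : ¬ cs.IsLeftDescent x i) :
    upR cs (upL cs i x) j = twMul cs star i x := by
  have hi' := cs.not_isLeftDescent_iff.mp hi
  rw [upL, if_neg hi, upR, twMul, hj]
  by_cases hcomm : s i * x = x * s j
  · rw [if_pos hcomm, if_pos]
    show ℓ (s i * x * s j) < ℓ (s i * x)
    rw [hcomm, mul_assoc, cs.simple_mul_simple_self, mul_one, ← hcomm]
    omega
  · rw [if_neg hcomm, if_neg]
    show ¬ ℓ (s i * x * s j) < ℓ (s i * x)
    rw [length_simple_mul_mul_simple_of_not_isLeftDescent cs hst hS hx hj hcomm hi]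
    omega

lemma upR_upL_of_isLeftDescent (hi : cs.IsLeftDescent x i) : upR cs (upL cs i x) j = x := by
  rw [upL, if_pos hi, upR, if_pos ((isRightDescent_iff_isLeftDescent cs hst hS hx hj).mpr hi)]

lemma downR_downL_of_isLeftDescent (hi : cs.IsLeftDescent x i) :
    downR cs (downL cs i x) j = twMul cs star i x := by
  have hi' := cs.isLeftDescent_iff.mp hi
  rw [downL, if_pos hi, downR, twMul, hj]
  by_cases hcomm : s i * x = x * s j
  · rw [if_pos hcomm, if_neg]
    show ¬ ℓ (s i * x * s j) < ℓ (s i * x)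
    rw [hcomm, mul_assoc, cs.simple_mul_simple_self, mul_one, ← hcomm]
    omega
  · rw [if_neg hcomm, if_pos]
    show ℓ (s i * x * s j) < ℓ (s i * x)
    have := length_simple_mul_mul_simple_of_isLeftDescent cs hst hS hx hj hcomm hi
    omega

lemma downR_downL_of_not_isLeftDescent (hi : ¬ cs.IsLeftDescent x i) :
    downR cs (downL cs i x) j = x := by
  rw [downL, if_neg hi, downR, if_neg (mt (isRightDescent_iff_isLeftDescent cs hst hS hx hj).mp hi)]

lemma isLeftDescent_twMul (hi : ¬ cs.IsLeftDescent x i) :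
    cs.IsLeftDescent (twMul cs star i x) i := by
  have hi' := cs.not_isLeftDescent_iff.mp hi
  rw [cs.isLeftDescent_iff, twMul, hj]
  by_cases hcomm : s i * x = x * s j
  · rw [if_pos hcomm, cs.simple_mul_simple_cancel_left]
    omega
  · rw [if_neg hcomm, length_simple_mul_mul_simple_of_not_isLeftDescent cs hst hS hx hj hcomm hi,
      mul_assoc, cs.simple_mul_simple_cancel_left,
      length_mul_simple_eq_length_simple_mul cs hst hS hx hj]
    omega

end

/-- The lifting property for twisted involutions: for twisted `x`, `downR cs (downL cs i x) j` is
`i ⋉ x` if `i` is a left descent of `x`, and `x` otherwise. -/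
theorem downR_downL_bruhat_of_bruhat_twMul (hst : ∀ v : W, star (star v) = v)
    (hS : ∀ i : B, ∃ j : B, star (s i) = s j) {x y : W} (hy : star y = y⁻¹) {i j : B}
    (hj : star (s i) = s j) (hi : ¬ cs.IsLeftDescent y i) (h : x ≤ᵇ twMul cs star i y) :
    downR cs (downL cs i x) j ≤ᵇ y := by
  have hty := twMul_mem cs star hst i hy
  have := downR_mono cs (downL_mono cs h i) j
  rwa [downR_downL_of_isLeftDescent cs hst hS hty hj (isLeftDescent_twMul cs hst hS hy hj hi),
    twMul_twMul] at this

end TwistedInvolutions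

section TwistedDemazure

local prefix:100 "s " => cs.simple
local prefix:100 "π " => cs.wordProd
local prefix:100 "ℓ " => cs.length
local infix:50 " ≤ᵇ " => BruhatChainLE cs

/-- The Demazure product `v ⋆ (v⁻¹)^*`. -/
def twistedDemazure (v : W) : W := demazureFold cs v (cs.exists_isReduced (star v⁻¹)).choose

variable {star}

lemma twistedDemazure_eq {v : W} {η : List B} (hη : cs.IsReduced η) (h : π η = star v⁻¹) :
    twistedDemazure cs star v = demazureFold cs v η := by
  obtain ⟨hred, hval⟩ := (cs.exists_isReduced (star v⁻¹)).choose_spec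
  exact demazureFold_congr cs hred hη (hval.symm.trans h.symm) v

lemma twistedDemazure_one : twistedDemazure cs star 1 = 1 :=
  twistedDemazure_eq cs (η := []) (by simp [CoxeterSystem.IsReduced]) (by simp)

lemma isLeftDescent_twistedDemazure {v : W} {i : B} (hv : cs.IsLeftDescent v i) :
    cs.IsLeftDescent (twistedDemazure cs star v) i := by
  rw [← upL_eq_self_iff, twistedDemazure, upL_demazureFold, (upL_eq_self_iff cs).mpr hv]

lemma twistedDemazure_of_isLeftDescent (hst : ∀ v : W, star (star v) = v)
    (hS : ∀ i : B, ∃ j : B, star (s i) = s j) {v : W} {i j : B} (hv : cs.IsLeftDescent v i)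
    (hj : star (s i) = s j) :
    twistedDemazure cs star v = upR cs (upL cs i (twistedDemazure cs star (s i * v))) j := by
  obtain ⟨η, hη, hηv⟩ := cs.exists_isReduced (star (s i * v)⁻¹)
  have hval : π (η ++ [j]) = star v⁻¹ := by
    rw [cs.wordProd_append, cs.wordProd_singleton, ← hηv, ← hj, ← map_mul, mul_inv_rev,
      cs.inv_simple, mul_assoc, cs.simple_mul_simple_self, mul_one]
  have hred : cs.IsReduced (η ++ [j]) := by
    rw [CoxeterSystem.IsReduced, hval, length_star cs hst hS, cs.length_inv, List.length_append,
      ← hη.eq, ← hηv, length_star cs hst hS, cs.length_inv, List.length_singleton,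
      cs.isLeftDescent_iff.mp hv]
  rw [twistedDemazure_eq cs hred hval, demazureFold_append_singleton,
    twistedDemazure_eq cs hη hηv.symm, upL_demazureFold, upL,
    if_neg (cs.isLeftDescent_iff_not_isLeftDescent_mul.mp hv), cs.simple_mul_simple_cancel_left]

lemma twProd_cons (i : B) (ω : List B) :
    twProd cs star (i :: ω) = twMul cs star i (twProd cs star ω) := rfl

section
variable (hst : ∀ v : W, star (star v) = v)
  (hS : ∀ i : B, ∃ j : B, star (cs.simple i) = cs.simple j)
include hst hS

lemma star_twistedDemazure (v : W) :
    star (twistedDemazure cs star v) = (twistedDemazure cs star v)⁻¹ := by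
  induction v using induction_on_isLeftDescent cs with
  | one => simp [twistedDemazure_one]
  | step v i hv ih =>
    obtain ⟨j, hj⟩ := hS i
    rw [twistedDemazure_of_isLeftDescent cs hst hS hv hj]
    by_cases hi : cs.IsLeftDescent (twistedDemazure cs star (s i * v)) i
    · rwa [upR_upL_of_isLeftDescent cs hst hS ih hj hi]
    · rw [upR_upL_of_not_isLeftDescent cs hst hS ih hj hi]
      exact twMul_mem cs star hst i ih

theorem exists_twProd_eq_of_bruhat_twistedDemazure (v : W) :
    ∀ x, star x = x⁻¹ → x ≤ᵇ twistedDemazure cs star v →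
      ∃ ζ : List B, twProd cs star ζ = x ∧ ζ.length ≤ ℓ v := by
  induction v using induction_on_isLeftDescent cs with
  | one =>
    intro x _ hle
    rw [twistedDemazure_one] at hle
    rcases eq_or_length_lt_of_bruhat cs hle with rfl | hlt
    · exact ⟨[], rfl, by simp⟩
    · simp at hlt
  | step v i hv ih =>
    intro x hx hle
    obtain ⟨j, hj⟩ := hS i
    have hlen := cs.isLeftDescent_iff.mp hv
    have hy := star_twistedDemazure cs hst hS (s i * v)
    rw [twistedDemazure_of_isLeftDescent cs hst hS hv hj] at hle
    by_cases hyi : cs.IsLeftDescent (twistedDemazure cs star (s i * v)) i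
    · rw [upR_upL_of_isLeftDescent cs hst hS hy hj hyi] at hle
      obtain ⟨ζ, hζ, hζlen⟩ := ih x hx hle
      exact ⟨ζ, hζ, by omega⟩
    rw [upR_upL_of_not_isLeftDescent cs hst hS hy hj hyi] at hle
    have hlift := downR_downL_bruhat_of_bruhat_twMul cs hst hS hy hj hyi hle
    by_cases hxi : cs.IsLeftDescent x i
    · rw [downR_downL_of_isLeftDescent cs hst hS hx hj hxi] at hlift
      obtain ⟨ζ, hζ, hζlen⟩ := ih _ (twMul_mem cs star hst i hx) hlift
      exact ⟨i :: ζ, by rw [twProd_cons, hζ, twMul_twMul], by simp; omega⟩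
    · rw [downR_downL_of_not_isLeftDescent cs hst hS hx hj hxi] at hlift
      obtain ⟨ζ, hζ, hζlen⟩ := ih x hx hlift
      exact ⟨ζ, hζ, by omega⟩

theorem exists_twProd_eq_twMul_of_isLeftDescent (v : W) {i : B}
    (hi : cs.IsLeftDescent (twistedDemazure cs star v) i) :
    ∃ ζ : List B, twProd cs star ζ = twMul cs star i (twistedDemazure cs star v) ∧
      ζ.length ≤ ℓ v := by
  obtain ⟨j, hj⟩ := hS i
  have hy := star_twistedDemazure cs hst hS v
  refine exists_twProd_eq_of_bruhat_twistedDemazure cs hst hS v _ (twMul_mem cs star hst i hy) ?_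
  rw [← downR_downL_of_isLeftDescent cs hst hS hy hj hi]
  exact bruhat_trans cs (downR_bruhat cs _ j) (downL_bruhat cs i _)

theorem isReduced_and_eq_twistedDemazure_of_isRedI {ω : List B} {w : W}
    (h : IsRedI cs star ω w) : cs.IsReduced ω ∧ w = twistedDemazure cs star (π ω) := by
  induction ω generalizing w with
  | nil =>
    obtain ⟨rfl, -⟩ := h
    exact ⟨by simp [CoxeterSystem.IsReduced], by simp [twProd, twistedDemazure_one]⟩
  | cons i α ih =>
    obtain ⟨rfl, hmin⟩ := h
    have hα : IsRedI cs star α (twProd cs star α) := ⟨rfl, fun ω' h' => by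
      simpa using hmin (i :: ω') (by rw [twProd_cons, twProd_cons, h'])⟩
    obtain ⟨hαred, hαy⟩ := ih hα
    obtain ⟨j, hj⟩ := hS i
    have hy : star (twProd cs star α) = (twProd cs star α)⁻¹ := by
      rw [hαy]; exact star_twistedDemazure cs hst hS _
    have hyi : ¬ cs.IsLeftDescent (twProd cs star α) i := by
      intro hyi
      rw [hαy] at hyi
      obtain ⟨ζ, hζ, hζlen⟩ := exists_twProd_eq_twMul_of_isLeftDescent cs hst hS (π α) hyi
      have := hmin ζ (by rw [hζ, ← hαy, twProd_cons])
      rw [hαred.eq] at hζlen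
      simp at this
      omega
    have hαi : ¬ cs.IsLeftDescent (π α) i := fun h =>
      hyi (hαy ▸ isLeftDescent_twistedDemazure cs h)
    refine ⟨?_, ?_⟩
    · rw [CoxeterSystem.IsReduced, cs.wordProd_cons, cs.not_isLeftDescent_iff.mp hαi, hαred.eq,
        List.length_cons]
    · have hdesc : cs.IsLeftDescent (s i * π α) i := by
        rwa [cs.isLeftDescent_iff_not_isLeftDescent_mul, cs.simple_mul_simple_cancel_left]
      rw [twProd_cons, ← upR_upL_of_not_isLeftDescent cs hst hS hy hj hyi, hαy,
        cs.wordProd_cons, twistedDemazure_of_isLeftDescent cs hst hS hdesc hj,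
        cs.simple_mul_simple_cancel_left]

end

end TwistedDemazure

theorem statement13
    {B W : Type*} [Group W] {M : CoxeterMatrix B} (cs : CoxeterSystem M W)
    (star : W ≃* W) (hst : ∀ v : W, star (star v) = v)
    (hS : ∀ i : B, ∃ j : B, star (cs.simple i) = cs.simple j)
    (E : {w : W // star w = w⁻¹} → List B)
    (hE : ∀ z : {w : W // star w = w⁻¹}, IsRedI cs star (E z) z.1) :
    Function.Injective (fun z : {w : W // star w = w⁻¹} => cs.wordProd (E z)) := by
  intro z₁ z₂ h
  have key (z : {w : W // star w = w⁻¹}) : z.1 = twistedDemazure cs star (cs.wordProd (E z)) :=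
    (isReduced_and_eq_twistedDemazure_of_isRedI cs hst hS (hE z)).2
  exact Subtype.ext ((key z₁).trans ((congrArg (twistedDemazure cs star) h).trans (key z₂).symm))

end IUIM
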